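/- arXiv:2509.03654 — 3 statements merged into one kernel-verified Lean document; each statement's English description precedes it below -/
import Mathlib

section
/- Let (V,A) be a finite directed graph in which every vertex has nonempty input set. A subset U ⊆ V is dominant (i.e., the increasing chain U₀ = U, U_{k+1} = U_k ∪ ∂U_k, where ∂W is the set of vertices all of whose in-neighbors lie in W, eventually reaches all of V) if and only if every directed cycle of (V,A) contains at least one vertex of U. -/
def boundary {V : Type*} (A : V → V → Prop) (W : Set V) : Set V :=
  {v | ∀ u, A u v → u ∈ W}

def chain {V : Type*} (A : V → V → Prop) (U : Set V) : ℕ → Set V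
  | 0 => U
  | k + 1 => chain A U k ∪ boundary A (chain A U k)

lemma chain_subset_succ {V : Type*} (A : V → V → Prop) (U : Set V) (k : ℕ) :
    chain A U k ⊆ chain A U (k + 1) := Set.subset_union_left

lemma chain_mono {V : Type*} (A : V → V → Prop) (U : Set V) :
    Monotone (chain A U) := monotone_nat_of_le_succ (chain_subset_succ A U)

/-- A subset `U` is dominant (its chain reaches all of `V`) iff every directed
cycle contains a vertex of `U`. -/
theorem stmt_0 {V : Type*} [Fintype V] (A : V → V → Prop)
    (hin : ∀ v : V, ∃ u, A u v) (U : Set V) :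
    (∃ k, chain A U k = Set.univ) ↔
      ∀ (ℓ : ℕ) (c : ℕ → V),
        (∀ i ≤ ℓ, A (c i) (c (i + 1))) → c (ℓ + 1) = c 0 →
          ∃ i ≤ ℓ, c i ∈ U := by
  classical
  constructor
  · rintro ⟨k, hk⟩ ℓ c hA hc
    by_contra h
    push_neg at h
    have key : ∀ k, ∀ i ≤ ℓ, c i ∉ chain A U k := by
      intro k
      induction k with
      | zero => exact h
      | succ k ih =>
        intro i hi hmem
        rcases hmem with hmem | hmem
        · exact ih i hi hmem
        · rcases Nat.eq_zero_or_pos i with rfl | hpos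
          · have hA' : A (c ℓ) (c 0) := hc ▸ hA ℓ le_rfl
            exact ih ℓ le_rfl (hmem _ hA')
          · obtain ⟨j, rfl⟩ := Nat.exists_eq_add_of_lt hpos
            simp only [Nat.zero_add] at *
            exact ih j (by omega) (hmem _ (hA j (by omega)))
    exact key k 0 (Nat.zero_le ℓ) (hk ▸ Set.mem_univ _)
  · intro hcyc
    obtain ⟨k, hk⟩ : ∃ k, chain A U (k + 1) = chain A U k := by
      by_contra hne
      push_neg at hne
      have hstrict : StrictMono fun k => (chain A U k).ncard := by
        apply strictMono_nat_of_lt_succ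
        intro k
        exact Set.ncard_lt_ncard
          ((chain_subset_succ A U k).ssubset_of_ne (Ne.symm (hne k))) (Set.toFinite _)
      have h1 := hstrict.le_apply (x := Fintype.card V + 1)
      have h2 : (chain A U (Fintype.card V + 1)).ncard ≤ Fintype.card V := by
        have := Set.ncard_le_ncard (Set.subset_univ (chain A U (Fintype.card V + 1)))
          Set.finite_univ
        rwa [Set.ncard_univ, Nat.card_eq_fintype_card] at this
      omega
    refine ⟨k, ?_⟩
    by_contra hne
    have ⟨v0, hv0⟩ : ∃ v, v ∉ chain A U k := by
      by_contra hall
      push_neg at hall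
      exact hne (Set.eq_univ_of_forall hall)
    have hpred : ∀ v : V, v ∉ chain A U k → ∃ u, A u v ∧ u ∉ chain A U k := by
      intro v hv
      by_contra hcon
      push_neg at hcon
      apply hv
      rw [← hk]
      exact Or.inr hcon
    set S := {v : V // v ∉ chain A U k} with hS
    let f : S → S := fun v => ⟨(hpred v.1 v.2).choose, (hpred v.1 v.2).choose_spec.2⟩
    have hf : ∀ v : S, A (f v).1 v.1 := fun v => (hpred v.1 v.2).choose_spec.1
    let x0 : S := ⟨v0, hv0⟩
    obtain ⟨m, n, hmn, heq⟩ := Finite.exists_ne_map_eq_of_infinite (fun i : ℕ => f^[i] x0)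
    wlog hlt : m < n generalizing m n
    · exact this n m (Ne.symm hmn) heq.symm (by omega)
    set p := n - m with hp
    have hppos : 0 < p := by omega
    set x : S := f^[m] x0 with hx
    have hfix : f^[p] x = x := by
      rw [hx, ← Function.iterate_add_apply]
      have : p + m = n := by omega
      rw [this]
      exact heq.symm
    set c : ℕ → V := fun i => (f^[p - i] x).1 with hcdef
    have hedge : ∀ i ≤ p - 1, A (c i) (c (i + 1)) := by
      intro i hi
      have h1 : p - i = (p - (i + 1)) + 1 := by omega
      show A ((f^[p - i] x) : S).1 ((f^[p - (i + 1)] x) : S).1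
      rw [h1, Function.iterate_succ_apply']
      exact hf _
    have hclose : c ((p - 1) + 1) = c 0 := by
      have h1 : p - ((p - 1) + 1) = 0 := by omega
      show ((f^[p - ((p-1)+1)] x) : S).1 = ((f^[p - 0] x) : S).1
      rw [h1]
      simp [hfix]
    obtain ⟨i, hi, hU⟩ := hcyc (p - 1) c hedge hclose
    have hUW : U ⊆ chain A U k := by
      have := chain_mono A U (Nat.zero_le k)
      simpa [chain] using this
    exact (f^[p - i] x).2 (hUW hU)
end

section
/- Dominance determines dynamics: Let F : B^V → B^V be a Boolean network on a finite directed graph (V,A) (i.e., F(x)_v depends only on the coordinates x_{I(v)}), and let U ⊆ V be a dominant set with chain U = U₀ ⊆ U₁ ⊆ ⋯ ⊆ U_d = V where U_{k+1} = U_k ∪ ∂U_k. If x, y ∈ B^V and t₀ ∈ ℕ satisfy F^t(x)_u = F^t(y)_u for all u ∈ U and all t with t₀ ≤ t ≤ t₀ + d, then F^t(x) = F^t(y) for all t ≥ t₀ + d. -/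
/-- Dominance determines dynamics: if two orbits of a Boolean network agree on a
dominant set `U` of depth `d` during `d+1` consecutive times, they coincide
from time `t₀ + d` on. -/
theorem stmt_3 {V : Type*} [Fintype V] (A : V → V → Prop)
    (F : (V → Bool) → V → Bool)
    (hloc : ∀ x y : V → Bool, ∀ v : V, (∀ u, A u v → x u = y u) → F x v = F y v)
    (U : Set V) (d : ℕ) (hdom : chain A U d = Set.univ)
    (x y : V → Bool) (t₀ : ℕ)
    (hagree : ∀ t, t₀ ≤ t → t ≤ t₀ + d → ∀ u ∈ U, F^[t] x u = F^[t] y u) :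
    ∀ t, t₀ + d ≤ t → F^[t] x = F^[t] y := by
  have key : ∀ k, ∀ t, t₀ + k ≤ t → t ≤ t₀ + d → ∀ v ∈ chain A U k,
      F^[t] x v = F^[t] y v := by
    intro k
    induction k with
    | zero => intro t ht1 ht2 v hv; exact hagree t (by omega) ht2 v hv
    | succ k ih =>
      intro t ht1 ht2 v hv
      rcases hv with hv | hv
      · exact ih t (by omega) ht2 v hv
      · obtain ⟨s, rfl⟩ : ∃ s, t = s + 1 := ⟨t - 1, by omega⟩
        rw [Function.iterate_succ_apply', Function.iterate_succ_apply']
        exact hloc _ _ v fun u hu => ih s (by omega) (by omega) u (hv u hu)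
  have base : F^[t₀ + d] x = F^[t₀ + d] y := by
    funext v
    exact key d (t₀ + d) le_rfl le_rfl v (by rw [hdom]; trivial)
  intro t ht
  obtain ⟨m, rfl⟩ : ∃ m, t = t₀ + d + m := ⟨t - (t₀ + d), by omega⟩
  induction m with
  | zero => exact base
  | succ m ihm =>
    have : t₀ + d + (m + 1) = (t₀ + d + m) + 1 := by omega
    rw [this, Function.iterate_succ_apply', Function.iterate_succ_apply',
      ihm (by omega)]
end

section
/- If F : X → X and G : Y → Y are finite dynamical systems and h : X → Y satisfies h ∘ F = G ∘ h, h is injective on Per(F), and h(Per(F)) = Per(G), then there exists h' : Y → X with h' ∘ G = F ∘ h' and h' injective on Per(G). -/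
open Function

private lemma aux_iterate_mem_periodicPts {Y : Type*} (G : Y → Y) {y : Y}
    (hy : y ∈ periodicPts G) (k : ℕ) : G^[k] y ∈ periodicPts G := by
  induction k with
  | zero => exact hy
  | succ k ih =>
    obtain ⟨n, hn, hp⟩ := ih
    exact ⟨n, hn, by simpa [Function.iterate_succ_apply'] using hp.apply⟩

private lemma aux_eventually_periodic {Y : Type*} [Finite Y] (G : Y → Y) (y : Y) :
    ∃ n, ∀ m ≥ n, G^[m] y ∈ periodicPts G := by
  obtain ⟨a, b, hab, heq⟩ := Finite.exists_ne_map_eq_of_infinite (fun n : ℕ => G^[n] y)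
  wlog hlt : a < b generalizing a b
  · exact this b a hab.symm heq.symm (by omega)
  have hper : G^[a] y ∈ periodicPts G := by
    refine ⟨b - a, by omega, ?_⟩
    show G^[b-a] (G^[a] y) = G^[a] y
    rw [← Function.iterate_add_apply]
    have : b - a + a = b := by omega
    rw [this]; exact heq.symm
  refine ⟨a, fun m hm => ?_⟩
  have : m - a + a = m := by omega
  rw [← this, Function.iterate_add_apply]
  exact aux_iterate_mem_periodicPts G hper _

/-- Eventual conjugacy is symmetric: from an eventual conjugacy `h : X → Y` one
can construct an eventual semiconjugacy `h' : Y → X` injective on the periodic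
points of `G`. -/
theorem stmt_8 {X Y : Type*} [Finite X] [Finite Y] [Nonempty X] [Nonempty Y]
    (F : X → X) (G : Y → Y) (h : X → Y)
    (hcomm : ∀ x, h (F x) = G (h x))
    (hinj : Set.InjOn h (Function.periodicPts F))
    (him : h '' Function.periodicPts F = Function.periodicPts G) :
    ∃ h' : Y → X, (∀ y, h' (G y) = F (h' y)) ∧
      Set.InjOn h' (Function.periodicPts G) := by
  classical
  have _i : Fintype Y := Fintype.ofFinite Y
  -- σ : inverse of h on periodic points
  set σ : Y → X := Function.invFunOn h (periodicPts F) with hσ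
  have hσ_mem : ∀ y ∈ periodicPts G, σ y ∈ periodicPts F := by
    intro y hy
    rw [← him] at hy
    exact Function.invFunOn_mem hy
  have hσ_eq : ∀ y ∈ periodicPts G, h (σ y) = y := by
    intro y hy
    rw [← him] at hy
    exact Function.invFunOn_eq hy
  have hσ_inj : Set.InjOn σ (periodicPts G) := by
    intro y1 h1 y2 h2 he
    rw [← hσ_eq y1 h1, ← hσ_eq y2 h2, he]
  have hGper : ∀ y ∈ periodicPts G, G y ∈ periodicPts G := fun y hy =>
    aux_iterate_mem_periodicPts G hy 1
  have hFper : ∀ x ∈ periodicPts F, F x ∈ periodicPts F := fun x hx =>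
    aux_iterate_mem_periodicPts F hx 1
  -- semiconjugacy of σ on periodic points
  have hσ_comm : ∀ y ∈ periodicPts G, σ (G y) = F (σ y) := by
    intro y hy
    apply hinj (hσ_mem _ (hGper y hy)) (hFper _ (hσ_mem y hy))
    rw [hσ_eq _ (hGper y hy), hcomm, hσ_eq y hy]
  -- uniform N such that G^[N] y is periodic for all y
  have hN : ∃ N, ∀ y, G^[N] y ∈ periodicPts G := by
    choose n hn using aux_eventually_periodic G
    refine ⟨Finset.univ.sup n, fun y => hn y _ ?_⟩
    exact Finset.le_sup (Finset.mem_univ y)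
  obtain ⟨N, hNper⟩ := hN
  refine ⟨fun y => σ (G^[N] y), ?_, ?_⟩
  · intro y
    have : G^[N] (G y) = G (G^[N] y) := by
      rw [← Function.iterate_succ_apply, Function.iterate_succ_apply']
    show σ (G^[N] (G y)) = F (σ (G^[N] y))
    rw [this, hσ_comm _ (hNper y)]
  · intro y1 h1 y2 h2 he
    have he' : G^[N] y1 = G^[N] y2 :=
      hσ_inj (hNper y1) (hNper y2) he
    -- both y1 y2 periodic: iterate forward to recover them
    obtain ⟨n1, hn1, hp1⟩ := h1
    obtain ⟨n2, hn2, hp2⟩ := h2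
    have key : ∀ (y : Y) (n : ℕ), 0 < n → IsPeriodicPt G n y → ∀ M, G^[n * M] y = y := by
      intro y n hn hp M
      induction M with
      | zero => simp
      | succ M ih =>
        rw [Nat.mul_succ, Function.iterate_add_apply, hp.eq, ih]
    -- choose M = N * n1 * n2 + (n1*n2 - N % (n1*n2))... simpler: common multiple ≥ N
    set L := n1 * n2 * (N + 1) with hL
    have hL1 : G^[L] y1 = y1 := by
      have : L = n1 * (n2 * (N + 1)) := by ring
      rw [this]; exact key y1 n1 hn1 hp1 _
    have hL2 : G^[L] y2 = y2 := by
      have : L = n2 * (n1 * (N + 1)) := by ring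
      rw [this]; exact key y2 n2 hn2 hp2 _
    have hLN : N ≤ L := by
      have h1' : 1 ≤ n1 := hn1
      have h2' : 1 ≤ n2 := hn2
      calc N ≤ N + 1 := Nat.le_succ N
        _ ≤ n1 * n2 * (N + 1) := Nat.le_mul_of_pos_left _ (Nat.mul_pos hn1 hn2)
    have : G^[L - N] (G^[N] y1) = G^[L - N] (G^[N] y2) := by rw [he']
    rw [← Function.iterate_add_apply, ← Function.iterate_add_apply,
      Nat.sub_add_cancel hLN, hL1, hL2] at this
    exact this
end
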